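/- The map R is a k-module automorphism of D*⊗D*; it commutes with the tensor-product differential d(a⊗b) = da⊗b + (−1)^{deg a} a⊗db; it satisfies μ∘R = μ, where μ : D*⊗D* → D* is the multiplication of the graded algebra D* (μ(f⊗g) = fg, μ(f⊗ω) = f·ω, μ(ω⊗f) = ω·f, μ(ω⊗θ) = 0); and R(1⊗a) = a⊗1 and R(a⊗1) = 1⊗a for every homogeneous a ∈ D*. -/

import Mathlib

/-- Basis labels for the differential graded algebra `D*` over `k`:
`one` is the constant function `1` (degree 0), `Y s` is the Heaviside function
with singular support `{s}` (degree 0), and `om s` is the Dirac function with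
singular support `{s}` (degree 1). -/
inductive DB : Type
  | one : DB
  | Y : ℤ → DB
  | om : ℤ → DB
  deriving DecidableEq

/-- cohomological degree of a basis element -/
def DB.deg : DB → ℕ
  | .one => 0
  | .Y _ => 0
  | .om _ => 1

/-- singular support of a basis element -/
def DB.supp : DB → Finset ℤ
  | .one => ∅
  | .Y s => {s}
  | .om s => {s}

variable (k : Type) [CommRing k]

/-- The `n`-fold tensor power `D*^{⊗n}` of the complex `D*` over `k`, modelled as the
free `k`-module on the basis of decomposable tensors `f₁ ⊗ ⋯ ⊗ f_n` of basis elements. -/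
abbrev Tot (n : ℕ) : Type := (Fin n → DB) →₀ k

/-- total (cohomological) degree of a basis tensor -/
def degT {n : ℕ} (g : Fin n → DB) : ℕ := ∑ i, (g i).deg

/-- the homogeneous degree-`i` component of `D*^{⊗n}` -/
def homog (n i : ℕ) : Submodule k (Tot k n) where
  carrier := {x | ∀ g, x g ≠ 0 → degT g = i}
  add_mem' := by
    intro x y hx hy g hg
    by_cases h : x g = 0
    · refine hy g ?_
      intro h'; apply hg; simp [Finsupp.add_apply, h, h']
    · exact hx g h
  zero_mem' := by intro g hg; simp at hg
  smul_mem' := by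
    intro c x hx g hg
    refine hx g fun h => hg ?_
    simp [Finsupp.smul_apply, h]

lemma mem_homog {n i : ℕ} {x : Tot k n} :
    x ∈ homog k n i ↔ ∀ g, x g ≠ 0 → degT g = i := Iff.rfl

/-- `I` : the span of the basis tensors `f₀ ⊗ ⋯ ⊗ f_r` in which every factor is a
Heaviside or a Dirac function (no factor equals `1`). -/
def noOne (n : ℕ) : Submodule k (Tot k n) where
  carrier := {x | ∀ g, x g ≠ 0 → ∀ i, g i ≠ DB.one}
  add_mem' := by
    intro x y hx hy g hg
    by_cases h : x g = 0
    · refine hy g ?_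
      intro h'; apply hg; simp [Finsupp.add_apply, h, h']
    · exact hx g h
  zero_mem' := by intro g hg; simp at hg
  smul_mem' := by
    intro c x hx g hg
    refine hx g fun h => hg ?_
    simp [Finsupp.smul_apply, h]

lemma mem_noOne {n : ℕ} {x : Tot k n} :
    x ∈ noOne k n ↔ ∀ g, x g ≠ 0 → ∀ i, g i ≠ DB.one := Iff.rfl

/-- The Koszul-sign differential on a basis tensor:
`d(f₁ ⊗ ⋯ ⊗ f_n) = Σ_i (-1)^{deg f₁ + ⋯ + deg f_{i-1}} f₁ ⊗ ⋯ ⊗ d f_i ⊗ ⋯ ⊗ f_n`,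
where `d(Y s) = - ω_s`, `d 1 = 0`, `d (ω s) = 0`. -/
noncomputable def dB {n : ℕ} (g : Fin n → DB) : Tot k n :=
  ∑ i : Fin n,
    match g i with
    | DB.Y s =>
        Finsupp.single (Function.update g i (DB.om s))
          (-(-1 : k) ^ (∑ j ∈ Finset.univ.filter (fun j : Fin n => j < i), (g j).deg))
    | _ => (0 : Tot k n)

/-- the total differential of the complex `D*^{⊗n}` (it raises degree by one) -/
noncomputable def dT (n : ℕ) : Tot k n →ₗ[k] Tot k n :=
  Finsupp.linearCombination k (dB k (n := n))


/-- the pair basis tensor `a ⊗ b` -/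
def p2 (a b : DB) : Fin 2 → DB := ![a, b]

/-- The braiding `R` on basis tensors, determined by:
`R(f ⊗ g) = g ⊗ f` for `f, g` of degree 0; `R(ω ⊗ g) = T(g) ⊗ ω` for `ω` of degree 1 and
`g` of degree 0 (where `T` is the translation, `T Y_t = Y_{t-1}`);
`R(f ⊗ ω) = ω ⊗ f − ι(ω) ⊗ df` (where `ι ω_t = Y_t − Y_{t-1}` and `d Y_s = −ω_s`);
and `R(ω ⊗ θ) = −T(θ) ⊗ ω` for `ω, θ` of degree 1. -/
noncomputable def Rb : DB → DB → Tot k 2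
  | DB.one, DB.om t => Finsupp.single (p2 (DB.om t) DB.one) 1
  | DB.Y s, DB.om t =>
      Finsupp.single (p2 (DB.om t) (DB.Y s)) 1
        + Finsupp.single (p2 (DB.Y t) (DB.om s)) 1
        - Finsupp.single (p2 (DB.Y (t - 1)) (DB.om s)) 1
  | DB.om s, DB.one => Finsupp.single (p2 DB.one (DB.om s)) 1
  | DB.om s, DB.Y t => Finsupp.single (p2 (DB.Y (t - 1)) (DB.om s)) 1
  | DB.om s, DB.om t => -Finsupp.single (p2 (DB.om (t - 1)) (DB.om s)) 1
  | a, b => Finsupp.single (p2 b a) 1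

/-- the braiding `R : D* ⊗ D* → D* ⊗ D*` -/
noncomputable def RT : Tot k 2 →ₗ[k] Tot k 2 :=
  Finsupp.linearCombination k fun g => Rb k (g 0) (g 1)

/-- `y ↦ y ⊗ c`, gluing a third factor on the right -/
noncomputable def appendR (c : DB) : Tot k 2 →ₗ[k] Tot k 3 :=
  Finsupp.linearCombination k fun g => Finsupp.single ![g 0, g 1, c] 1

/-- `y ↦ c ⊗ y`, gluing a third factor on the left -/
noncomputable def appendL (c : DB) : Tot k 2 →ₗ[k] Tot k 3 :=
  Finsupp.linearCombination k fun g => Finsupp.single ![c, g 0, g 1] 1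

/-- `R ⊗ id : D*⊗D*⊗D* → D*⊗D*⊗D*` -/
noncomputable def R12 : Tot k 3 →ₗ[k] Tot k 3 :=
  Finsupp.linearCombination k fun g =>
    appendR k (g 2) (RT k (Finsupp.single ![g 0, g 1] 1))

/-- `id ⊗ R : D*⊗D*⊗D* → D*⊗D*⊗D*` -/
noncomputable def R23 : Tot k 3 →ₗ[k] Tot k 3 :=
  Finsupp.linearCombination k fun g =>
    appendL k (g 0) (RT k (Finsupp.single ![g 1, g 2] 1))

/-- multiplication of `D*` on basis elements (`Y_u Y_t = Y_{min u t}`,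
`Y_u ω_t = ω_t` if `t ≤ u` and `0` otherwise, `ω_t Y_u = ω_t` if `t + 1 ≤ u` and `0`
otherwise, `ω ω' = 0`). -/
noncomputable def mulB : DB → DB → Tot k 1
  | DB.one, b => Finsupp.single (fun _ => b) 1
  | a, DB.one => Finsupp.single (fun _ => a) 1
  | DB.Y s, DB.Y t => Finsupp.single (fun _ => DB.Y (min s t)) 1
  | DB.Y s, DB.om t => if t ≤ s then Finsupp.single (fun _ => DB.om t) 1 else 0
  | DB.om t, DB.Y s => if t + 1 ≤ s then Finsupp.single (fun _ => DB.om t) 1 else 0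
  | DB.om _, DB.om _ => 0

/-- the multiplication `μ : D* ⊗ D* → D*` -/
noncomputable def muT : Tot k 2 →ₗ[k] Tot k 1 :=
  Finsupp.linearCombination k fun g => mulB k (g 0) (g 1)

/-- `a ↦ 1 ⊗ a` -/
noncomputable def lT : Tot k 1 →ₗ[k] Tot k 2 :=
  Finsupp.linearCombination k fun g => Finsupp.single (p2 DB.one (g 0)) 1

/-- `a ↦ a ⊗ 1` -/
noncomputable def rT : Tot k 1 →ₗ[k] Tot k 2 :=
  Finsupp.linearCombination k fun g => Finsupp.single (p2 (g 0) DB.one) 1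
/-!
Both sides of every identity are `k`-linear and `D* ⊗ D*` is free on the basis tensors `a ⊗ b`
of the labels `1`, `Y s`, `ω t`, so each claim reduces to a finite check on pairs of labels.
Bijectivity comes from an explicit inverse of `R`, obtained by solving the defining formulas
of `R` on basis tensors.
-/

lemma p2_eta (g : Fin 2 → DB) : p2 (g 0) (g 1) = g := by
  funext i; fin_cases i <;> rfl

@[simp] lemma p2_zero (a b : DB) : p2 a b 0 = a := rfl

@[simp] lemma p2_one (a b : DB) : p2 a b 1 = b := rfl

lemma update_p2_zero (a b c : DB) : Function.update (p2 a b) 0 c = p2 c b := by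
  funext i; fin_cases i <;> simp [p2]

lemma update_p2_one (a b c : DB) : Function.update (p2 a b) 1 c = p2 a c := by
  funext i; fin_cases i <;> simp [p2]

lemma Tot.lhom_ext_p2 {N : Type*} [AddCommMonoid N] [Module k N] {φ ψ : Tot k 2 →ₗ[k] N}
    (h : ∀ a b : DB, φ (Finsupp.single (p2 a b) 1) = ψ (Finsupp.single (p2 a b) 1)) :
    φ = ψ := by
  refine Finsupp.lhom_ext' fun g => LinearMap.ext_ring ?_
  simpa [p2_eta] using h (g 0) (g 1)

@[simp] lemma RT_single (a b : DB) (c : k) :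
    RT k (Finsupp.single (p2 a b) c) = c • Rb k a b := by
  simp [RT, Finsupp.linearCombination_single]

@[simp] lemma dT_single (g : Fin 2 → DB) (c : k) :
    dT k 2 (Finsupp.single g c) = c • dB k g := by
  simp [dT, Finsupp.linearCombination_single]

@[simp] lemma muT_single (a b : DB) (c : k) :
    muT k (Finsupp.single (p2 a b) c) = c • mulB k a b := by
  simp [muT, Finsupp.linearCombination_single]

lemma dB_p2 (a b : DB) : dB k (p2 a b) =
    (match a with
     | DB.Y s => Finsupp.single (p2 (DB.om s) b) (-1 : k)
     | _ => 0)
    + (match b with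
     | DB.Y t => Finsupp.single (p2 a (DB.om t)) (-(-1 : k) ^ a.deg)
     | _ => 0) := by
  rw [dB, Fin.sum_univ_two]
  congr 1
  · rcases a with _ | s | s <;> simp [update_p2_zero]
  · rcases b with _ | t | t <;> simp [update_p2_one, Finset.filter_eq']

noncomputable def RbInv : DB → DB → Tot k 2
  | DB.om t, DB.one => Finsupp.single (p2 DB.one (DB.om t)) 1
  | DB.one, DB.om s => Finsupp.single (p2 (DB.om s) DB.one) 1
  | DB.Y u, DB.om s => Finsupp.single (p2 (DB.om s) (DB.Y (u + 1))) 1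
  | DB.om t, DB.Y s =>
      Finsupp.single (p2 (DB.Y s) (DB.om t)) 1
        - Finsupp.single (p2 (DB.om s) (DB.Y (t + 1))) 1
        + Finsupp.single (p2 (DB.om s) (DB.Y t)) 1
  | DB.om u, DB.om s => -Finsupp.single (p2 (DB.om s) (DB.om (u + 1))) 1
  | a, b => Finsupp.single (p2 b a) 1

noncomputable def RTinv : Tot k 2 →ₗ[k] Tot k 2 :=
  Finsupp.linearCombination k fun g => RbInv k (g 0) (g 1)

@[simp] lemma RTinv_single (a b : DB) (c : k) :
    RTinv k (Finsupp.single (p2 a b) c) = c • RbInv k a b := by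
  simp [RTinv, Finsupp.linearCombination_single]

lemma RTinv_comp_RT : (RTinv k).comp (RT k) = LinearMap.id := by
  refine Tot.lhom_ext_p2 k fun a b => ?_
  rcases a with _ | s | s <;> rcases b with _ | t | t <;> simp [Rb, RbInv]
  abel

lemma RT_comp_RTinv : (RT k).comp (RTinv k) = LinearMap.id := by
  refine Tot.lhom_ext_p2 k fun a b => ?_
  rcases a with _ | s | s <;> rcases b with _ | t | t <;> simp [Rb, RbInv]
  abel

lemma RT_bijective : Function.Bijective (RT k) :=
  (LinearEquiv.ofLinearMap (RT k) (RTinv k) (RT_comp_RTinv k) (RTinv_comp_RT k) :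
    Tot k 2 ≃ₗ[k] Tot k 2).bijective

lemma dT_comp_RT : (dT k 2).comp (RT k) = (RT k).comp (dT k 2) := by
  refine Tot.lhom_ext_p2 k fun a b => ?_
  rcases a with _ | s | s <;> rcases b with _ | t | t <;> simp [Rb, dB_p2, DB.deg]
  abel

lemma muT_comp_RT : (muT k).comp (RT k) = muT k := by
  refine Tot.lhom_ext_p2 k fun a b => ?_
  rcases a with _ | s | s <;> rcases b with _ | t | t <;> simp [Rb, mulB, min_comm]
  -- `μ(ω_t ⊗ Y_s + (Y_t − Y_{t-1}) ⊗ ω_s) = [t < s] ω_t + [s = t] ω_s = [t ≤ s] ω_t`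
  rcases lt_trichotomy s t with h | rfl | h
  · rw [if_neg (by omega), if_pos (by omega), if_pos (by omega), if_neg (by omega)]
    abel
  · simp
  · rw [if_pos (by omega), if_neg (by omega), if_neg (by omega), if_pos (by omega)]
    abel

lemma RT_comp_lT : (RT k).comp (lT k) = rT k := by
  refine Finsupp.lhom_ext fun g c => ?_
  rcases h : g 0 with _ | t | t <;> simp [lT, rT, Finsupp.linearCombination_single, Rb, h]

lemma RT_comp_rT : (RT k).comp (rT k) = lT k := by
  refine Finsupp.lhom_ext fun g c => ?_
  rcases h : g 0 with _ | t | t <;> simp [lT, rT, Finsupp.linearCombination_single, Rb, h]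

/-- The braiding `R` is a `k`-module automorphism of `D* ⊗ D*`, it
commutes with the tensor-product differential, it satisfies `μ ∘ R = μ` where `μ` is the
multiplication of `D*`, and `R(1 ⊗ a) = a ⊗ 1`, `R(a ⊗ 1) = 1 ⊗ a` for every homogeneous
`a ∈ D*`. -/
theorem statement14 (k : Type) [CommRing k] :
    Function.Bijective (RT k) ∧
    (dT k 2).comp (RT k) = (RT k).comp (dT k 2) ∧
    (muT k).comp (RT k) = muT k ∧
    (∀ a : Tot k 1, (∃ i : ℕ, a ∈ homog k 1 i) →
        RT k (lT k a) = rT k a ∧ RT k (rT k a) = lT k a) :=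
  ⟨RT_bijective k, dT_comp_RT k, muT_comp_RT k, fun a _ =>
    ⟨LinearMap.congr_fun (RT_comp_lT k) a, LinearMap.congr_fun (RT_comp_rT k) a⟩⟩
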